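/- If G is a finite p-group of order pⁿ with n ≥ 2 and exponent p, then η(G) ≥ n + p − 1. -/

import Mathlib

/-!
In a group of exponent `p` the maximal cyclic subgroups are exactly the subgroups of order `p`.
If `K` is a normal subgroup of order `p`, sending `C` to its image in `G ⧸ K` maps the conjugacy
classes of such subgroups of `G` onto those of `G ⧸ K`, while the class of `K` itself goes to `⊥`;
hence `η(G) ≥ η(G ⧸ K) + 1`, and a central `K` always exists. When `|G| = p²` the group is abelian
and its `p² - 1` nontrivial elements fall into the subgroups of order `p`, `p - 1` at a time,
so `η(G) = p + 1`.
-/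

/-- A subgroup is maximal cyclic if it is cyclic and not properly contained
in any cyclic subgroup. -/
def IsMaximalCyclic {G : Type*} [Group G] (C : Subgroup G) : Prop :=
  IsCyclic C ∧ ∀ D : Subgroup G, IsCyclic D → C ≤ D → C = D

/-- η(G): the number of conjugacy classes of maximal cyclic subgroups of `G`. -/
noncomputable def eta (G : Type*) [Group G] : ℕ :=
  Nat.card (Quot (fun C D : {C : Subgroup G // IsMaximalCyclic C} =>
    ∃ g : G, D.1 = C.1.map (MulAut.conj g).toMonoidHom))

/-- The set of elements generating a non-maximal cyclic subgroup. -/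
def Gminus (G : Type*) [Group G] : Set G :=
  {g : G | ¬ IsMaximalCyclic (Subgroup.zpowers g)}

/-- `C` is a maximal cyclic subgroup of `N` (all inside an ambient group). -/
def IsMaximalCyclicIn {G : Type*} [Group G] (N C : Subgroup G) : Prop :=
  C ≤ N ∧ IsCyclic C ∧ ∀ D : Subgroup G, D ≤ N → IsCyclic D → C ≤ D → C = D

universe u

open Subgroup

def SubgroupConjClasses (G : Type u) [Group G] (P : Subgroup G → Prop) : Type u :=
  Quot fun C D : {C : Subgroup G // P C} => ∃ g : G, D.1 = C.1.map (MulAut.conj g).toMonoidHom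

theorem eta_eq_card_subgroupConjClasses (G : Type u) [Group G] :
    eta G = Nat.card (SubgroupConjClasses G IsMaximalCyclic) := rfl

instance SubgroupConjClasses.finite {G : Type u} [Group G] [Finite G] (P : Subgroup G → Prop) :
    Finite (SubgroupConjClasses G P) :=
  have : Finite (Subgroup G) := Finite.of_injective _ SetLike.coe_injective
  Quot.finite _

section

variable {G : Type u} [Group G]

theorem Subgroup.normal_of_le_center {H : Subgroup G} (h : H ≤ center G) : H.Normal :=
  ⟨fun n hn g => by simpa [mem_center_iff.mp (h hn) g]⟩

theorem Subgroup.zpowers_eq_of_card_eq_prime {p : ℕ} [Fact p.Prime] {C : Subgroup G}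
    (hC : Nat.card C = p) {g : G} (hgC : g ∈ C) (hg : g ≠ 1) : zpowers g = C := by
  have : Finite C := Nat.finite_of_card_ne_zero (hC ▸ (Fact.out : p.Prime).ne_zero)
  refine eq_of_le_of_card_ge (zpowers_le.mpr hgC) ?_
  rw [hC, Nat.card_zpowers,
    orderOf_eq_prime (orderOf_dvd_iff_pow_eq_one.mp (hC ▸ C.orderOf_dvd_natCard hgC)) hg]

theorem Subgroup.map_map_conj {H : Type*} [Group H] (π : G →* H) (g : G) (C : Subgroup G) :
    (C.map (MulAut.conj g).toMonoidHom).map π = (C.map π).map (MulAut.conj (π g)).toMonoidHom := by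
  rw [map_map, map_map]
  congr 1
  ext x
  simp

theorem card_conjClasses_eq_of_isMulCommutative [IsMulCommutative G] (P : Subgroup G → Prop) :
    Nat.card (SubgroupConjClasses G P) = Nat.card {C // P C} := by
  have hconj (g : G) : (MulAut.conj g).toMonoidHom = MonoidHom.id G := by
    ext x
    simp [mul_comm' g x]
  have hrel : ∀ C D : {C // P C}, (∃ g : G, D.1 = C.1.map (MulAut.conj g).toMonoidHom) → C = D := by
    rintro C D ⟨g, hg⟩
    rw [hconj, map_id] at hg
    exact Subtype.ext hg.symm
  refine (Nat.card_congr (Equiv.ofBijective (Quot.mk _) ⟨fun C D h => ?_, Quot.mk_surjective⟩)).symm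
  exact congrArg (Quot.lift id hrel) h

variable {p : ℕ} [Fact p.Prime]

theorem card_zpowers_eq_prime (hexp : ∀ g : G, g ^ p = 1) {g : G} (hg : g ≠ 1) :
    Nat.card (zpowers g) = p := by
  rw [Nat.card_zpowers, orderOf_eq_prime (hexp g) hg]

theorem isMaximalCyclic_iff_card_eq_prime [Finite G] [Nontrivial G] (hexp : ∀ g : G, g ^ p = 1)
    (C : Subgroup G) : IsMaximalCyclic C ↔ Nat.card C = p := by
  constructor
  · rintro ⟨hcyc, hmax⟩
    obtain ⟨g, rfl⟩ := C.isCyclic_iff_exists_zpowers_eq_top.mp hcyc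
    obtain rfl | hg := eq_or_ne g 1
    · obtain ⟨a, ha⟩ := exists_ne (1 : G)
      have := hmax (zpowers a) inferInstance (by simp)
      simp_all [eq_comm (a := ⊥)]
    · exact card_zpowers_eq_prime hexp hg
  · intro hC
    refine ⟨isCyclic_of_prime_card hC, fun D hD hCD => ?_⟩
    obtain ⟨g, rfl⟩ := D.isCyclic_iff_exists_zpowers_eq_top.mp hD
    refine eq_of_le_of_card_ge hCD ?_
    rw [hC, Nat.card_zpowers]
    exact orderOf_le_of_pow_eq_one (Fact.out : p.Prime).pos (hexp g)

theorem eta_eq_card_conjClasses_card_eq_prime [Finite G] [Nontrivial G]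
    (hexp : ∀ g : G, g ^ p = 1) :
    eta G = Nat.card (SubgroupConjClasses G (Nat.card · = p)) := by
  rw [eta_eq_card_subgroupConjClasses]
  congr 2
  ext C
  exact isMaximalCyclic_iff_card_eq_prime hexp C

theorem card_conjClasses_add_one_le_of_surjective [Finite G] (hexp : ∀ g : G, g ^ p = 1)
    {H : Type u} [Group H] (π : G →* H) (hπ : Function.Surjective π) (hker : Nat.card π.ker = p) :
    Nat.card (SubgroupConjClasses H (Nat.card · = p)) + 1 ≤
      Nat.card (SubgroupConjClasses G (Nat.card · = p)) := by
  classical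
  have : Finite H := Finite.of_surjective π hπ
  let f (C : {C : Subgroup G // Nat.card C = p}) : Option (SubgroupConjClasses H (Nat.card · = p)) :=
    if h : Nat.card (C.1.map π) = p then some (Quot.mk _ ⟨_, h⟩) else none
  have hf : ∀ C D : {C : Subgroup G // Nat.card C = p},
      (∃ g : G, D.1 = C.1.map (MulAut.conj g).toMonoidHom) → f C = f D := by
    rintro C D ⟨g, hg⟩
    have hD : D.1.map π = (C.1.map π).map (MulAut.conj (π g)).toMonoidHom := by
      rw [hg, map_map_conj]
    have hcard : Nat.card (D.1.map π) = Nat.card (C.1.map π) := by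
      rw [hD, card_map_of_injective (MulAut.conj (π g)).injective]
    by_cases h : Nat.card (C.1.map π) = p
    · simp only [f, dif_pos h, dif_pos (hcard.trans h)]
      exact congrArg some (Quot.sound ⟨π g, hD⟩)
    · simp only [f, dif_neg h, dif_neg (hcard.trans_ne h)]
  have hsurj : Function.Surjective (Quot.lift f hf) := by
    rintro (_ | q)
    · refine ⟨Quot.mk _ ⟨π.ker, hker⟩, dif_neg ?_⟩
      rw [(Subgroup.map_eq_bot_iff _).mpr le_rfl, card_bot]
      exact (Fact.out : p.Prime).one_lt.ne
    · obtain ⟨⟨D, hD⟩, rfl⟩ := Quot.mk_surjective q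
      obtain ⟨y, hyD, hy⟩ := D.bot_or_exists_ne_one.resolve_left fun h => by
        simp [h, (Fact.out : p.Prime).one_lt.ne] at hD
      obtain ⟨x, rfl⟩ := hπ y
      have hx : x ≠ 1 := by rintro rfl; exact hy (map_one π)
      have hmap : (zpowers x).map π = D := by
        rw [MonoidHom.map_zpowers, zpowers_eq_of_card_eq_prime hD hyD hy]
      refine ⟨Quot.mk _ ⟨zpowers x, card_zpowers_eq_prime hexp hx⟩, ?_⟩
      show f _ = _
      simp only [f, hmap, hD, dite_true]
  calc Nat.card (SubgroupConjClasses H (Nat.card · = p)) + 1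
      = Nat.card (Option (SubgroupConjClasses H (Nat.card · = p))) := Finite.card_option.symm
    _ ≤ _ := Nat.card_le_card_of_surjective _ hsurj

theorem card_subgroups_card_eq_prime_mul [Finite G] (hexp : ∀ g : G, g ^ p = 1) :
    Nat.card {C : Subgroup G // Nat.card C = p} * (p - 1) = Nat.card G - 1 := by
  classical
  have := Fintype.ofFinite G
  have : Fintype (Subgroup G) := Fintype.ofFinite _
  let S : Finset (Subgroup G) := Finset.univ.filter (Nat.card · = p)
  have hmaps : ∀ g ∈ Finset.univ.erase (1 : G), zpowers g ∈ S := fun g hg =>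
    Finset.mem_filter.mpr ⟨Finset.mem_univ _, card_zpowers_eq_prime hexp (Finset.ne_of_mem_erase hg)⟩
  have hfiber : ∀ C ∈ S, ((Finset.univ.erase 1).filter (zpowers · = C)).card = p - 1 := by
    intro C hC
    have hC : Nat.card C = p := (Finset.mem_filter.mp hC).2
    have : (Finset.univ.erase 1).filter (zpowers · = C) = (Finset.univ.filter (· ∈ C)).erase 1 := by
      ext g
      simp only [Finset.mem_filter, Finset.mem_erase, Finset.mem_univ, and_true, true_and]
      exact ⟨fun ⟨hg, hgC⟩ => ⟨hg, hgC ▸ mem_zpowers g⟩,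
        fun ⟨hg, hgC⟩ => ⟨hg, zpowers_eq_of_card_eq_prime hC hgC hg⟩⟩
    rw [this, Finset.card_erase_of_mem (by simp), ← hC,
      Nat.card_eq_fintype_card, Fintype.card_subtype]
  calc Nat.card {C : Subgroup G // Nat.card C = p} * (p - 1)
      = ∑ C ∈ S, (p - 1) := by
        rw [Finset.sum_const, smul_eq_mul, Nat.card_eq_fintype_card, Fintype.card_subtype]
    _ = ∑ C ∈ S, ((Finset.univ.erase 1).filter (zpowers · = C)).card :=
        Finset.sum_congr rfl fun C hC => (hfiber C hC).symm
    _ = (Finset.univ.erase (1 : G)).card := (Finset.card_eq_sum_card_fiberwise hmaps).symm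
    _ = Nat.card G - 1 := by
        rw [Finset.card_erase_of_mem (Finset.mem_univ _), Finset.card_univ, Nat.card_eq_fintype_card]

theorem card_conjClasses_card_eq_prime_of_card_eq_sq [Finite G] (hexp : ∀ g : G, g ^ p = 1)
    (hcard : Nat.card G = p ^ 2) :
    Nat.card (SubgroupConjClasses G (Nat.card · = p)) = p + 1 := by
  have hcount := card_subgroups_card_eq_prime_mul hexp
  have := IsPGroup.isMulCommutative_of_card_eq_prime_sq hcard
  rw [← card_conjClasses_eq_of_isMulCommutative, hcard] at hcount
  refine Nat.eq_of_mul_eq_mul_right (Nat.sub_pos_of_lt (Fact.out : p.Prime).one_lt) (hcount.trans ?_)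
  rw [← Nat.sq_sub_sq, one_pow]

end

theorem le_card_conjClasses_card_eq_prime {p n : ℕ} [Fact p.Prime] (hn : 2 ≤ n) :
    ∀ (G : Type u) [Group G] [Finite G], Nat.card G = p ^ n → (∀ g : G, g ^ p = 1) →
      n + p - 1 ≤ Nat.card (SubgroupConjClasses G (Nat.card · = p)) := by
  have hp : p.Prime := Fact.out
  induction n, hn using Nat.le_induction with
  | base =>
    intro G _ _ hcard hexp
    rw [card_conjClasses_card_eq_prime_of_card_eq_sq hexp hcard]
    omega
  | succ n _ ih =>
    intro G _ _ hcard hexp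
    have : Nontrivial G := Finite.one_lt_card_iff_nontrivial.mp
      (hcard ▸ Nat.one_lt_pow (by omega) hp.one_lt)
    have : Nontrivial (center G) := (IsPGroup.of_card hcard).center_nontrivial
    obtain ⟨⟨k, hk⟩, hk1⟩ := exists_ne (1 : center G)
    have hk1 : k ≠ 1 := fun h => hk1 (Subtype.ext h)
    let K := zpowers k
    have : K.Normal := normal_of_le_center (zpowers_le.mpr hk)
    have hK : Nat.card K = p := card_zpowers_eq_prime hexp hk1
    have hquot : Nat.card (G ⧸ K) = p ^ n := by
      have h := K.card_eq_card_quotient_mul_card_subgroup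
      rw [hcard, hK, pow_succ] at h
      exact (Nat.eq_of_mul_eq_mul_right hp.pos h).symm
    have hstep := card_conjClasses_add_one_le_of_surjective hexp (QuotientGroup.mk' K)
      (QuotientGroup.mk'_surjective K) (by rwa [QuotientGroup.ker_mk'])
    have := ih (G ⧸ K) hquot (fun x => by
      obtain ⟨g, rfl⟩ := QuotientGroup.mk'_surjective K x
      rw [← map_pow, hexp, map_one])
    omega

theorem stmt_19 {G : Type*} [Group G] [Finite G] {p n : ℕ} (hp : p.Prime)
    (hn : 2 ≤ n) (hcard : Nat.card G = p ^ n) (hexp : ∀ g : G, g ^ p = 1) :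
    n + p - 1 ≤ eta G := by
  have : Fact p.Prime := ⟨hp⟩
  have : Nontrivial G := Finite.one_lt_card_iff_nontrivial.mp
    (hcard ▸ Nat.one_lt_pow (by omega) hp.one_lt)
  rw [eta_eq_card_conjClasses_card_eq_prime hexp]
  exact le_card_conjClasses_card_eq_prime hn G hcard hexp
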